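/- Decidability-style invariance: for the Core logic sequent calculus, derivability of Δ ⊢ C is preserved under adding an intuitionistic theorem T to the antecedent only up to the failure of weakening; concretely, there exist a theorem T (namely ¬A → (A → B)) and a sequent (¬A, A ⊢ B, A and B distinct atoms) such that Δ ⊢ C is not derivable but T, Δ ⊢ C is derivable. -/
import Mathlib


inductive Form : Type where
  | var : Nat → Form
  | neg : Form → Form
  | conj : Form → Form → Form
  | disj : Form → Form → Form
  | imp : Form → Form → Form
deriving DecidableEq

open Form

/-- Sequent calculus for propositional Core logic (Tennant).
Contexts are finite sets of formulas; the conclusion is `some C` or `none`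
(the empty / absurdity conclusion ⊥). -/
inductive Core : Finset Form → Option Form → Prop where
  | ax (A : Form) : Core {A} (some A)
  | lneg {Δ : Finset Form} {A : Form} :
      Core Δ (some A) → Core (insert (Form.neg A) Δ) none
  | rneg {Δ : Finset Form} {A : Form} :
      Core (insert A Δ) none → Core Δ (some (Form.neg A))
  | landL {Δ : Finset Form} {x : Option Form} (A B : Form) :
      Core Δ x → (Δ ∩ {A, B}).Nonempty →
      Core (insert (Form.conj A B) (Δ \ {A, B})) x
  | randR {Δ Γ : Finset Form} {A B : Form} :
      Core Δ (some A) → Core Γ (some B) → Core (Δ ∪ Γ) (some (Form.conj A B))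
  | lor {Δ Γ : Finset Form} {A B : Form} {x y z : Option Form} :
      Core (insert A Δ) x → Core (insert B Γ) y →
      ((x = z ∧ (y = z ∨ y = none)) ∨ (y = z ∧ x = none)) →
      Core (insert (Form.disj A B) (Δ ∪ Γ)) z
  | ror1 {Δ : Finset Form} {A : Form} (B : Form) :
      Core Δ (some A) → Core Δ (some (Form.disj A B))
  | ror2 {Δ : Finset Form} {B : Form} (A : Form) :
      Core Δ (some B) → Core Δ (some (Form.disj A B))
  | limp {Δ Γ : Finset Form} {A B : Form} {x : Option Form} :
      Core Δ (some A) → Core (insert B Γ) x →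
      Core (insert (Form.imp A B) (Δ ∪ Γ)) x
  | rimpa {Δ : Finset Form} {A : Form} (B : Form) :
      Core (insert A Δ) none → Core Δ (some (Form.imp A B))
  | rimpb {Δ : Finset Form} {B : Form} (A : Form) :
      Core Δ (some B) → Core (Δ \ {A}) (some (Form.imp A B))

/-- there is a theorem T (namely ¬A → (A → B)) and a sequent
(¬A, A ⊢ B, with A, B distinct atoms) such that Δ ⊢ C is not Core-derivable
but T, Δ ⊢ C is Core-derivable. -/
theorem core_Ltop_violates_weakening_invariance :
    ∃ p q : Nat, p ≠ q ∧
      Core (∅ : Finset Form)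
        (some (Form.imp (Form.neg (Form.var p))
          (Form.imp (Form.var p) (Form.var q)))) ∧
      ¬ Core ({Form.neg (Form.var p), Form.var p} : Finset Form)
          (some (Form.var q)) ∧
      Core (insert (Form.imp (Form.neg (Form.var p)) (Form.imp (Form.var p) (Form.var q)))
          ({Form.neg (Form.var p), Form.var p} : Finset Form))
        (some (Form.var q)) := by
  refine ⟨0, 1, by decide, ?_, ?_, ?_⟩
  · -- ⊢ ¬p → (p → q)
    have h1 : Core (insert (Form.neg (Form.var 0)) {Form.var 0}) none :=
      Core.lneg (Core.ax _)
    have h2 : Core (insert (Form.var 0) {Form.neg (Form.var 0)}) none := by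
      have : (insert (Form.neg (Form.var 0)) {Form.var 0} : Finset Form)
          = insert (Form.var 0) {Form.neg (Form.var 0)} := by
        ext z; simp [or_comm]
      rwa [this] at h1
    have h3 : Core {Form.neg (Form.var 0)} (some (Form.imp (Form.var 0) (Form.var 1))) :=
      Core.rimpa _ h2
    have h4 := Core.rimpb (Form.neg (Form.var 0)) h3
    simpa using h4
  · intro h
    generalize hD : ({Form.neg (Form.var 0), Form.var 0} : Finset Form) = D at h
    cases h with
    | ax =>
        have : Form.var 1 ∈ ({Form.neg (Form.var 0), Form.var 0} : Finset Form) := by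
          rw [hD]; simp
        simp at this
    | landL A B h hne =>
        have : Form.conj A B ∈ ({Form.neg (Form.var 0), Form.var 0} : Finset Form) := by
          rw [hD]; simp
        simp at this
    | lor h1 h2 h3 =>
        rename_i Δ Γ A B x y
        have : Form.disj A B ∈ ({Form.neg (Form.var 0), Form.var 0} : Finset Form) := by
          rw [hD]; simp
        simp at this
    | limp h1 h2 =>
        rename_i Δ Γ A B
        have : Form.imp A B ∈ ({Form.neg (Form.var 0), Form.var 0} : Finset Form) := by
          rw [hD]; simp
        simp at this
  · have hpq : Core (insert (Form.imp (Form.var 0) (Form.var 1))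
        ({Form.var 0} ∪ (∅ : Finset Form))) (some (Form.var 1)) :=
      Core.limp (Core.ax _) (by simpa using Core.ax (Form.var 1))
    have h2 : Core (insert (Form.imp (Form.neg (Form.var 0)) (Form.imp (Form.var 0) (Form.var 1)))
        (({Form.neg (Form.var 0)} : Finset Form) ∪ {Form.var 0})) (some (Form.var 1)) :=
      Core.limp (Core.ax _) (by simpa using hpq)
    simpa using h2
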